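/- arXiv:1904.10832 — 4 statements merged into one kernel-verified Lean document; each statement's English description precedes it below -/
import Mathlib

section
/- Let v ∈ ℝ² satisfy ℓ₊(v) > 0 and ℓ₋(v) > 0. Then there exists an integer k such that the vector w = (M^k).mulVec v (an integer power of the invertible matrix M, which has determinant 1) lies in the cone C, i.e. w 0 ≥ 0 and w 0 + 6·(w 1) ≥ 0. -/
/-- The linear form `ℓ₊(x,y) = ((2-√2)x + (2+√2)y)/8`. -/
noncomputable def lplus (v : Fin 2 → ℝ) : ℝ :=
  ((2 - Real.sqrt 2) * v 0 + (2 + Real.sqrt 2) * v 1) / 8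

/-- The linear form `ℓ₋(x,y) = ((2+√2)x + (2-√2)y)/8`. -/
noncomputable def lminus (v : Fin 2 → ℝ) : ℝ :=
  ((2 + Real.sqrt 2) * v 0 + (2 - Real.sqrt 2) * v 1) / 8

/-!
`M` has eigenvectors `Δ₊`, `Δ₋` with eigenvalues `λ = 17 + 12√2` and `λ⁻¹`, and `ℓ₊`, `ℓ₋` are the
coordinates in this eigenbasis, so `M^k` multiplies `ℓ₊` by `λ^k` and `ℓ₋` by `λ^(-k)`: the ratio
`ℓ₊ / ℓ₋` of a big class gets multiplied by `λ²`. In these coordinates `C` is the sector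
`99 - 70√2 ≤ ℓ₊ / ℓ₋ ≤ 3 + 2√2`, whose two bounds differ by exactly the factor `λ²`, so every orbit
of a big class meets it.
-/

open Real

theorem exists_zpow_mem_sector {K : Type*} [Field K] [LinearOrder K] [IsStrictOrderedRing K]
    [Archimedean K] {r a b c : K} (hr : 1 < r) (ha : 0 < a) (hb : 0 < b) (hc : 0 < c) :
    ∃ k : ℤ, c * (b * r ^ (-k)) ≤ a * r ^ k ∧ a * r ^ k ≤ c * r ^ 2 * (b * r ^ (-k)) := by
  have hr0 : 0 < r := zero_lt_one.trans hr
  obtain ⟨n, hlow, hhigh⟩ := exists_mem_Ico_zpow (div_pos (mul_pos hc hb) ha)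
    (one_lt_pow₀ hr two_ne_zero)
  set u := r ^ (n + 1) with hu_def
  have hu : 0 < u := zpow_pos hr0 _
  have hsq : (r ^ 2) ^ (n + 1) = u ^ 2 := by
    rw [← zpow_natCast, ← zpow_mul, ← zpow_natCast, ← zpow_mul, mul_comm]
  replace hhigh : c * b < a * u ^ 2 := by
    rw [hsq, div_lt_iff₀ ha] at hhigh; linarith
  replace hlow : a * u ^ 2 ≤ r ^ 2 * (c * b) := by
    rw [le_div_iff₀ ha] at hlow
    rw [← hsq, zpow_add_one₀ (pow_pos hr0 2).ne']
    linarith [mul_le_mul_of_nonneg_left hlow (sq_nonneg r)]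
  refine ⟨n + 1, ?_, ?_⟩ <;>
  · rw [zpow_neg, ← hu_def, ← mul_le_mul_iff_of_pos_right hu]
    field_simp
    linarith

namespace Matrix

variable {n : Type*} [Fintype n] [DecidableEq n]

theorem pow_mulVec_of_mulVec_eq_smul {R : Type*} [CommSemiring R] {A : Matrix n n R} {μ : R}
    {p : n → R} (h : A *ᵥ p = μ • p) (k : ℕ) : A ^ k *ᵥ p = μ ^ k • p := by
  induction k with
  | zero => rw [pow_zero, pow_zero, one_mulVec, one_smul]
  | succ k ih => rw [pow_succ, ← mulVec_mulVec, h, mulVec_smul, ih, smul_smul, pow_succ']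

variable {K : Type*} [Field K]

theorem inv_mulVec_of_mulVec_eq_smul {A : Matrix n n K} (hA : IsUnit A.det) {μ : K}
    {p : n → K} (h : A *ᵥ p = μ • p) : A⁻¹ *ᵥ p = μ⁻¹ • p := by
  have hp : p = μ • A⁻¹ *ᵥ p := by
    rw [← mulVec_smul, ← h, mulVec_mulVec, nonsing_inv_mul A hA, one_mulVec]
  rcases eq_or_ne μ 0 with rfl | hμ
  · rw [hp, zero_smul, mulVec_zero, smul_zero]
  · exact ((inv_smul_eq_iff₀ hμ).mpr hp).symm

theorem zpow_mulVec_of_mulVec_eq_smul {A : Matrix n n K} (hA : IsUnit A.det) {μ : K}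
    {p : n → K} (h : A *ᵥ p = μ • p) (k : ℤ) : A ^ k *ᵥ p = μ ^ k • p := by
  obtain ⟨m, rfl | rfl⟩ := Int.eq_nat_or_neg k
  · simpa using pow_mulVec_of_mulVec_eq_smul h m
  · rw [← inv_zpow' hA, _root_.zpow_neg, zpow_natCast, zpow_natCast, ← inv_pow]
    exact pow_mulVec_of_mulVec_eq_smul (inv_mulVec_of_mulVec_eq_smul hA h) m

end Matrix

namespace Oguiso

open Matrix

def M : Matrix (Fin 2) (Fin 2) ℝ := !![-1, -6; 6, 35]

noncomputable def lambda : ℝ := 17 + 12 * √2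

noncomputable def Δplus : Fin 2 → ℝ := ![1 - √2, 1 + √2]

noncomputable def Δminus : Fin 2 → ℝ := ![1 + √2, 1 - √2]

def C : Set (Fin 2 → ℝ) := {w | 0 ≤ w 0 ∧ 0 ≤ w 0 + 6 * w 1}

theorem one_lt_lambda : 1 < lambda := by
  have := Real.sqrt_nonneg 2
  unfold lambda; linarith

theorem lambda_inv : lambda⁻¹ = 17 - 12 * √2 :=
  inv_eq_of_mul_eq_one_right (by
    unfold lambda; linear_combination (-144 : ℝ) * Real.sq_sqrt zero_le_two)

theorem isUnit_det_M : IsUnit M.det := by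
  norm_num [M, det_fin_two_of]

theorem M_mulVec_Δplus : M *ᵥ Δplus = lambda • Δplus := by
  ext i; fin_cases i <;>
  · simp only [M, lambda, Δplus, mulVec, dotProduct, Fin.sum_univ_two, of_apply,
      cons_val', cons_val_zero, cons_val_one, cons_val_fin_one, Fin.zero_eta, Fin.mk_one,
      Pi.smul_apply, smul_eq_mul]
    linarith [Real.sq_sqrt (zero_le_two (α := ℝ))]

theorem M_mulVec_Δminus : M *ᵥ Δminus = lambda⁻¹ • Δminus := by
  rw [lambda_inv]
  ext i; fin_cases i <;>
  · simp only [M, Δminus, mulVec, dotProduct, Fin.sum_univ_two, of_apply,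
      cons_val', cons_val_zero, cons_val_one, cons_val_fin_one, Fin.zero_eta, Fin.mk_one,
      Pi.smul_apply, smul_eq_mul]
    linarith [Real.sq_sqrt (zero_le_two (α := ℝ))]

theorem eq_lplus_smul_add_lminus_smul (v : Fin 2 → ℝ) :
    v = lplus v • Δplus + lminus v • Δminus := by
  have h2 := Real.sq_sqrt zero_le_two
  ext i; fin_cases i
  · simp only [lplus, lminus, Δplus, Δminus, Fin.zero_eta, Pi.add_apply, smul_cons, smul_eq_mul,
      smul_empty, cons_val_zero]
    linear_combination (v 1 - v 0) / 4 * h2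
  · simp only [lplus, lminus, Δplus, Δminus, Fin.mk_one, Pi.add_apply, smul_cons, smul_eq_mul,
      smul_empty, cons_val_one, cons_val_fin_one]
    linear_combination (v 0 - v 1) / 4 * h2

theorem M_zpow_mulVec (k : ℤ) (v : Fin 2 → ℝ) :
    M ^ k *ᵥ v = (lplus v * lambda ^ k) • Δplus + (lminus v * lambda ^ (-k)) • Δminus := by
  conv_lhs => rw [eq_lplus_smul_add_lminus_smul v]
  rw [mulVec_add, mulVec_smul, mulVec_smul,
    zpow_mulVec_of_mulVec_eq_smul isUnit_det_M M_mulVec_Δplus,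
    zpow_mulVec_of_mulVec_eq_smul isUnit_det_M M_mulVec_Δminus, smul_smul, smul_smul,
    _root_.inv_zpow']

theorem add_smul_mem_C {α β : ℝ} (hlow : (99 - 70 * √2) * β ≤ α)
    (hhigh : α ≤ (3 + 2 * √2) * β) : α • Δplus + β • Δminus ∈ C := by
  have h2 := Real.sq_sqrt zero_le_two
  have h1 : 1 ≤ √2 := Real.one_le_sqrt.mpr one_le_two
  simp only [C, Set.mem_ofPred_eq, Δplus, Δminus, Pi.add_apply, Pi.smul_apply, smul_eq_mul,
    cons_val_zero, cons_val_one]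
  have h2β : √2 ^ 2 * β = 2 * β := by rw [h2]
  constructor
  · linarith [mul_le_mul_of_nonneg_left hhigh (sub_nonneg.mpr h1)]
  · linarith [mul_le_mul_of_nonneg_left hlow (by positivity : (0 : ℝ) ≤ 7 + 5 * √2)]

theorem seventy_mul_sqrt_two_lt : 70 * √2 < 99 := by
  nlinarith [Real.sq_sqrt (zero_le_two (α := ℝ)), Real.sqrt_nonneg 2]

theorem sector_ratio : (99 - 70 * √2) * lambda ^ 2 = 3 + 2 * √2 := by
  unfold lambda; linear_combination (-14304 - 10080 * √2) * Real.sq_sqrt zero_le_two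

end Oguiso

open Oguiso

/-- If `v ∈ ℝ²` satisfies `ℓ₊(v) > 0` and `ℓ₋(v) > 0`, then some integer power
`M^k` of `M = !![-1,-6;6,35]` moves `v` into the cone
`C = {(x,y) : x ≥ 0 and x + 6y ≥ 0}`. -/
theorem stmt_6 (v : Fin 2 → ℝ) (hp : 0 < lplus v) (hm : 0 < lminus v) :
    ∃ k : ℤ, 0 ≤ ((!![(-1 : ℝ), -6; 6, 35] ^ k).mulVec v) 0 ∧
      0 ≤ ((!![(-1 : ℝ), -6; 6, 35] ^ k).mulVec v) 0 +
        6 * ((!![(-1 : ℝ), -6; 6, 35] ^ k).mulVec v) 1 := by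
  obtain ⟨k, hlow, hhigh⟩ :=
    exists_zpow_mem_sector one_lt_lambda hp hm (sub_pos.mpr seventy_mul_sqrt_two_lt)
  rw [sector_ratio] at hhigh
  have hk : (M ^ k).mulVec v ∈ C := by
    rw [M_zpow_mulVec]
    exact add_smul_mem_C hlow hhigh
  exact ⟨k, hk⟩
end

section
/- There exist constants c₁, c₂ > 0 such that for every (x,y) ∈ ℝ² with x ≥ 0, x + 6y ≥ 0 and (x,y) ≠ (0,0): c₁·(x² + 6xy + y²)^(3/2) ≤ max (2x³ + 18x²y + 18xy² + 2y³) (2(x+6y)³ + 18(x+6y)²(-y) + 18(x+6y)(-y)² + 2(-y)³) ≤ c₂·(x² + 6xy + y²)^(3/2). -/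
/-- Lower bound on the nef branch: if `u, v ≥ 0` and `s² = u²+6uv+v²`, `s ≥ 0`,
then `s³ ≤ f(u,v)`. -/
lemma aux_lower (u v s : ℝ) (hu : 0 ≤ u) (hv : 0 ≤ v) (hs : 0 ≤ s)
    (h : s ^ 2 = u ^ 2 + 6 * u * v + v ^ 2) :
    s ^ 3 ≤ 2 * u ^ 3 + 18 * u ^ 2 * v + 18 * u * v ^ 2 + 2 * v ^ 3 := by
  have h1 : s ≤ 2 * (u + v) := by nlinarith [sq_nonneg (s - 2 * (u + v)), mul_nonneg hu hv]
  nlinarith [mul_le_mul_of_nonneg_right h1 (sq_nonneg s), sq_nonneg s,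
    mul_nonneg (mul_nonneg hu hu) hv, mul_nonneg (mul_nonneg hu hv) hv]

/-- Upper bound on the nef branch. -/
lemma aux_upper_nef (u v s : ℝ) (hu : 0 ≤ u) (hv : 0 ≤ v) (hs : 0 ≤ s)
    (h : s ^ 2 = u ^ 2 + 6 * u * v + v ^ 2) :
    2 * u ^ 3 + 18 * u ^ 2 * v + 18 * u * v ^ 2 + 2 * v ^ 3 ≤ 4320 * s ^ 3 := by
  have h1 : u + v ≤ s := by nlinarith [sq_nonneg (s - (u + v)), mul_nonneg hu hv, sq_nonneg (s + (u + v))]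
  have h2 : (u + v) ^ 3 ≤ s ^ 3 := pow_le_pow_left₀ (by positivity) h1 3
  nlinarith [mul_nonneg (mul_nonneg hu hu) hv, mul_nonneg (mul_nonneg hu hv) hv,
    mul_nonneg (mul_nonneg hu hu) hu, mul_nonneg (mul_nonneg hv hv) hv]

/-- Upper bound on the non-nef branch: `x ≥ 0`, `x + 6y ≥ 0`, `y ≤ 0`. -/
lemma aux_upper_other (x y s : ℝ) (hx : 0 ≤ x) (hxy : 0 ≤ x + 6 * y) (hy : y ≤ 0)
    (hs : 0 ≤ s) (h : s ^ 2 = x ^ 2 + 6 * x * y + y ^ 2) :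
    2 * x ^ 3 + 18 * x ^ 2 * y + 18 * x * y ^ 2 + 2 * y ^ 3 ≤ 4320 * s ^ 3 := by
  -- 144 q - x² = 136 x(x+6y) + 4(x+6y)² + 3x² ≥ 0
  have hq : x ^ 2 ≤ 144 * s ^ 2 := by
    nlinarith [mul_nonneg hx hxy, sq_nonneg (x + 6 * y), sq_nonneg x]
  have h1 : x ≤ 12 * s := by nlinarith [sq_nonneg (x - 12 * s), sq_nonneg (x + 12 * s)]
  have h2 : x ^ 3 ≤ (12 * s) ^ 3 := pow_le_pow_left₀ hx h1 3
  -- |y| ≤ x/6, so 18xy² ≤ x³/2, and 18x²y ≤ 0, 2y³ ≤ 0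
  have hyx : -y ≤ x / 6 := by linarith
  have hy2 : y ^ 2 ≤ x ^ 2 / 36 := by nlinarith
  have hxyy : 18 * x * y ^ 2 ≤ x ^ 3 / 2 := by nlinarith
  have hxxy : 18 * x ^ 2 * y ≤ 0 := by nlinarith [sq_nonneg x]
  have hy3 : 2 * y ^ 3 ≤ 0 := by nlinarith [sq_nonneg y]
  nlinarith

/-- There exist constants `c₁, c₂ > 0` such that for every `(x,y) ∈ ℝ²` with `x ≥ 0`,
`x + 6y ≥ 0` and `(x,y) ≠ (0,0)`:
`c₁·(x²+6xy+y²)^(3/2) ≤ max(f(x,y), f(x+6y,-y)) ≤ c₂·(x²+6xy+y²)^(3/2)`, where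
`f(x,y) = 2x³ + 18x²y + 18xy² + 2y³`. -/
theorem stmt_10 :
    ∃ c₁ c₂ : ℝ, 0 < c₁ ∧ 0 < c₂ ∧
      ∀ x y : ℝ, 0 ≤ x → 0 ≤ x + 6 * y → (x, y) ≠ (0, 0) →
        c₁ * (x ^ 2 + 6 * x * y + y ^ 2) ^ ((3 : ℝ) / 2)
            ≤ max (2 * x ^ 3 + 18 * x ^ 2 * y + 18 * x * y ^ 2 + 2 * y ^ 3)
              (2 * (x + 6 * y) ^ 3 + 18 * (x + 6 * y) ^ 2 * (-y)
                + 18 * (x + 6 * y) * (-y) ^ 2 + 2 * (-y) ^ 3) ∧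
          max (2 * x ^ 3 + 18 * x ^ 2 * y + 18 * x * y ^ 2 + 2 * y ^ 3)
              (2 * (x + 6 * y) ^ 3 + 18 * (x + 6 * y) ^ 2 * (-y)
                + 18 * (x + 6 * y) * (-y) ^ 2 + 2 * (-y) ^ 3)
            ≤ c₂ * (x ^ 2 + 6 * x * y + y ^ 2) ^ ((3 : ℝ) / 2) := by
  refine ⟨1, 4320, one_pos, by norm_num, fun x y hx hxy _ => ?_⟩
  set q : ℝ := x ^ 2 + 6 * x * y + y ^ 2 with hqdef
  have hq0 : 0 ≤ q := by nlinarith [mul_nonneg hx hxy, sq_nonneg y]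
  set s : ℝ := Real.sqrt q with hsdef
  have hs0 : 0 ≤ s := Real.sqrt_nonneg q
  have hs2 : s ^ 2 = q := Real.sq_sqrt hq0
  have hpow : q ^ ((3 : ℝ) / 2) = s ^ 3 := by
    rw [hsdef, Real.sqrt_eq_rpow, ← Real.rpow_natCast (q ^ ((1 : ℝ) / 2)) 3,
      ← Real.rpow_mul hq0]
    norm_num
  rw [hpow]
  have hqinv : s ^ 2 = (x + 6 * y) ^ 2 + 6 * (x + 6 * y) * (-y) + (-y) ^ 2 := by
    rw [hs2]; ring
  rcases le_or_gt 0 y with hy | hy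
  · constructor
    · refine le_max_of_le_left ?_
      have := aux_lower x y s hx hy hs0 (by rw [hs2])
      linarith
    · refine max_le ?_ ?_
      · have := aux_upper_nef x y s hx hy hs0 (by rw [hs2])
        linarith
      · have := aux_upper_other (x + 6 * y) (-y) s hxy (by linarith) (by linarith) hs0
          hqinv
        linarith
  · constructor
    · refine le_max_of_le_right ?_
      have := aux_lower (x + 6 * y) (-y) s hxy (by linarith) hs0 hqinv
      linarith
    · refine max_le ?_ ?_
      · have := aux_upper_other x y s hx hxy (le_of_lt hy) hs0 (by rw [hs2])
        linarith
      · have := aux_upper_nef (x + 6 * y) (-y) s hxy (by linarith) hs0 hqinv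
        linarith
end

section
/- Fix integers a₁, a₂ ≥ 2. Then there exist constants c₁, c₂ > 0 such that for every integer m ≥ 1, the vector v_m = (⌊m(1-√2)⌋ + a₁, ⌊m(1+√2)⌋ + a₂) satisfies ℓ₊(v_m) > 0, ℓ₋(v_m) > 0, and c₁·m ≤ (v_m)₁² + 6(v_m)₁(v_m)₂ + (v_m)₂² ≤ c₂·m. -/
lemma stmt_13_aux2 (m S Lp Lm : ℝ) (hm : 1 ≤ m) (hS : 4 ≤ S)
    (h1 : m + 1 / 2 < Lp) (h2 : Lp ≤ m + S / 2) (h3 : 1 / 2 < Lm) (h4 : Lm ≤ S / 2) :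
    16 * m ≤ 32 * Lp * Lm ∧ 32 * Lp * Lm ≤ 16 * S ^ 2 * m := by
  constructor
  · nlinarith [mul_nonneg (by linarith : (0:ℝ) ≤ Lp - (m + 1/2)) (by linarith : (0:ℝ) ≤ Lm - 1/2)]
  · nlinarith [mul_nonneg (by linarith : (0:ℝ) ≤ m + S / 2 - Lp) (by linarith : (0:ℝ) ≤ Lm),
      mul_nonneg (by linarith : (0:ℝ) ≤ S / 2 - Lm) (by linarith : (0:ℝ) ≤ m + S / 2),
      mul_nonneg (mul_nonneg (by linarith : (0:ℝ) ≤ S) (by linarith : (0:ℝ) ≤ S))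
        (by linarith : (0:ℝ) ≤ m - 1)]

/-- Pure real-arithmetic core of the estimate. -/
lemma stmt_13_aux (s m A₁ A₂ x y : ℝ) (hs2 : s ^ 2 = 2) (hs1 : 1 < s) (hs3 : s < 3 / 2)
    (hm : 1 ≤ m) (hA1 : 2 ≤ A₁) (hA2 : 2 ≤ A₂)
    (hx1 : m * (1 - s) + A₁ - 1 < x) (hx2 : x ≤ m * (1 - s) + A₁)
    (hy1 : m * (1 + s) + A₂ - 1 < y) (hy2 : y ≤ m * (1 + s) + A₂) :
    0 < ((2 - s) * x + (2 + s) * y) / 8 ∧ 0 < ((2 + s) * x + (2 - s) * y) / 8 ∧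
      16 * m ≤ x ^ 2 + 6 * x * y + y ^ 2 ∧
      x ^ 2 + 6 * x * y + y ^ 2 ≤ 16 * (A₁ + A₂) ^ 2 * m := by
  have hms : m * s ^ 2 = m * 2 := by rw [hs2]
  have e1 : (0 : ℝ) < 2 - s := by linarith
  have e2 : (0 : ℝ) < 2 + s := by linarith
  have p1 : 0 < (2 - s) * (x - (m * (1 - s) + A₁ - 1)) := mul_pos e1 (by linarith)
  have p2 : 0 ≤ (2 - s) * ((m * (1 - s) + A₁) - x) := mul_nonneg e1.le (by linarith)
  have p3 : 0 < (2 + s) * (y - (m * (1 + s) + A₂ - 1)) := mul_pos e2 (by linarith)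
  have p4 : 0 ≤ (2 + s) * ((m * (1 + s) + A₂) - y) := mul_nonneg e2.le (by linarith)
  have q1 : 0 < (2 + s) * (x - (m * (1 - s) + A₁ - 1)) := mul_pos e2 (by linarith)
  have q2 : 0 ≤ (2 + s) * ((m * (1 - s) + A₁) - x) := mul_nonneg e2.le (by linarith)
  have q3 : 0 < (2 - s) * (y - (m * (1 + s) + A₂ - 1)) := mul_pos e1 (by linarith)
  have q4 : 0 ≤ (2 - s) * ((m * (1 + s) + A₂) - y) := mul_nonneg e1.le (by linarith)
  have r1 : 0 ≤ (2 - s) * (A₁ - 2) := mul_nonneg e1.le (by linarith)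
  have r2 : 0 ≤ (2 + s) * (A₂ - 2) := mul_nonneg e2.le (by linarith)
  have r3 : 0 ≤ (2 + s) * (A₁ - 2) := mul_nonneg e2.le (by linarith)
  have r4 : 0 ≤ (2 - s) * (A₂ - 2) := mul_nonneg e1.le (by linarith)
  have hlp1 : m + 1 / 2 < ((2 - s) * x + (2 + s) * y) / 8 := by
    linarith [p1, p3, r1, r2, hms]
  have hlp2 : ((2 - s) * x + (2 + s) * y) / 8 ≤ m + (A₁ + A₂) / 2 := by
    linarith [p2, p4, r1, r2, hms]
  have hlm1 : (1 : ℝ) / 2 < ((2 + s) * x + (2 - s) * y) / 8 := by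
    linarith [q1, q3, r3, r4, hms]
  have hlm2 : ((2 + s) * x + (2 - s) * y) / 8 ≤ (A₁ + A₂) / 2 := by
    linarith [q2, q4, r3, r4, hms]
  have hq : x ^ 2 + 6 * x * y + y ^ 2
      = 32 * (((2 - s) * x + (2 + s) * y) / 8) * (((2 + s) * x + (2 - s) * y) / 8) := by
    linear_combination ((x ^ 2 + y ^ 2) / 2 - x * y) * hs2
  obtain ⟨hq1, hq2⟩ := stmt_13_aux2 m (A₁ + A₂) (((2 - s) * x + (2 + s) * y) / 8)
    (((2 + s) * x + (2 - s) * y) / 8) hm (by linarith) hlp1 hlp2 hlm1 hlm2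
  exact ⟨by linarith, by linarith, by linarith [hq1], by linarith [hq2]⟩

/-- Fix integers `a₁, a₂ ≥ 2`.  Then there are constants `c₁, c₂ > 0` such that for every
integer `m ≥ 1`, the vector `v_m = (⌊m(1-√2)⌋ + a₁, ⌊m(1+√2)⌋ + a₂)` satisfies
`ℓ₊(v_m) > 0`, `ℓ₋(v_m) > 0`, and `c₁·m ≤ q(v_m) ≤ c₂·m` where
`q(x,y) = x² + 6xy + y²`. -/
theorem stmt_13 (a₁ a₂ : ℤ) (ha₁ : 2 ≤ a₁) (ha₂ : 2 ≤ a₂) :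
    ∃ c₁ c₂ : ℝ, 0 < c₁ ∧ 0 < c₂ ∧
      ∀ m : ℤ, 1 ≤ m →
        0 < lplus ![(⌊(m : ℝ) * (1 - Real.sqrt 2)⌋ : ℝ) + (a₁ : ℝ),
              (⌊(m : ℝ) * (1 + Real.sqrt 2)⌋ : ℝ) + (a₂ : ℝ)] ∧
          0 < lminus ![(⌊(m : ℝ) * (1 - Real.sqrt 2)⌋ : ℝ) + (a₁ : ℝ),
              (⌊(m : ℝ) * (1 + Real.sqrt 2)⌋ : ℝ) + (a₂ : ℝ)] ∧
          c₁ * (m : ℝ) ≤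
              ((⌊(m : ℝ) * (1 - Real.sqrt 2)⌋ : ℝ) + (a₁ : ℝ)) ^ 2
                + 6 * ((⌊(m : ℝ) * (1 - Real.sqrt 2)⌋ : ℝ) + (a₁ : ℝ))
                  * ((⌊(m : ℝ) * (1 + Real.sqrt 2)⌋ : ℝ) + (a₂ : ℝ))
                + ((⌊(m : ℝ) * (1 + Real.sqrt 2)⌋ : ℝ) + (a₂ : ℝ)) ^ 2 ∧
            ((⌊(m : ℝ) * (1 - Real.sqrt 2)⌋ : ℝ) + (a₁ : ℝ)) ^ 2
                + 6 * ((⌊(m : ℝ) * (1 - Real.sqrt 2)⌋ : ℝ) + (a₁ : ℝ))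
                  * ((⌊(m : ℝ) * (1 + Real.sqrt 2)⌋ : ℝ) + (a₂ : ℝ))
                + ((⌊(m : ℝ) * (1 + Real.sqrt 2)⌋ : ℝ) + (a₂ : ℝ)) ^ 2
              ≤ c₂ * (m : ℝ) := by
  have hs2 : Real.sqrt 2 ^ 2 = 2 := Real.sq_sqrt (by norm_num)
  have hs0 : 0 ≤ Real.sqrt 2 := Real.sqrt_nonneg 2
  have hs1 : 1 < Real.sqrt 2 := by nlinarith
  have hs3 : Real.sqrt 2 < 3 / 2 := by nlinarith
  have ha1 : (2 : ℝ) ≤ (a₁ : ℝ) := by exact_mod_cast ha₁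
  have ha2 : (2 : ℝ) ≤ (a₂ : ℝ) := by exact_mod_cast ha₂
  refine ⟨16, 16 * ((a₁ : ℝ) + (a₂ : ℝ)) ^ 2, by norm_num, by nlinarith, ?_⟩
  intro m hm
  have hm1 : (1 : ℝ) ≤ (m : ℝ) := by exact_mod_cast hm
  have hx1 : (m : ℝ) * (1 - Real.sqrt 2) + (a₁ : ℝ) - 1
      < (⌊(m : ℝ) * (1 - Real.sqrt 2)⌋ : ℝ) + (a₁ : ℝ) := by
    have := Int.sub_one_lt_floor ((m : ℝ) * (1 - Real.sqrt 2)); linarith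
  have hx2 : (⌊(m : ℝ) * (1 - Real.sqrt 2)⌋ : ℝ) + (a₁ : ℝ)
      ≤ (m : ℝ) * (1 - Real.sqrt 2) + (a₁ : ℝ) := by
    have := Int.floor_le ((m : ℝ) * (1 - Real.sqrt 2)); linarith
  have hy1 : (m : ℝ) * (1 + Real.sqrt 2) + (a₂ : ℝ) - 1
      < (⌊(m : ℝ) * (1 + Real.sqrt 2)⌋ : ℝ) + (a₂ : ℝ) := by
    have := Int.sub_one_lt_floor ((m : ℝ) * (1 + Real.sqrt 2)); linarith
  have hy2 : (⌊(m : ℝ) * (1 + Real.sqrt 2)⌋ : ℝ) + (a₂ : ℝ)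
      ≤ (m : ℝ) * (1 + Real.sqrt 2) + (a₂ : ℝ) := by
    have := Int.floor_le ((m : ℝ) * (1 + Real.sqrt 2)); linarith
  obtain ⟨h1, h2, h3, h4⟩ := stmt_13_aux (Real.sqrt 2) (m : ℝ) (a₁ : ℝ) (a₂ : ℝ)
    ((⌊(m : ℝ) * (1 - Real.sqrt 2)⌋ : ℝ) + (a₁ : ℝ))
    ((⌊(m : ℝ) * (1 + Real.sqrt 2)⌋ : ℝ) + (a₂ : ℝ))
    hs2 hs1 hs3 hm1 ha1 ha2 hx1 hx2 hy1 hy2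
  refine ⟨?_, ?_, by linarith, by linarith⟩
  · simpa [lplus, Matrix.cons_val_zero, Matrix.cons_val_one, Matrix.head_cons] using h1
  · simpa [lminus, Matrix.cons_val_zero, Matrix.cons_val_one, Matrix.head_cons] using h2
end

section
/- Fix integers a₁, a₂ ≥ 2. There exist constants c₁, c₂ > 0 such that for every integer m ≥ 1 there exist an integer k and a vector w ∈ ℤ² with: w = (M^k).mulVec v_m or w = (T₁ * M^k).mulVec v_m, where v_m = (⌊m(1-√2)⌋ + a₁, ⌊m(1+√2)⌋ + a₂); both coordinates of w are ≥ 0; and c₁·m^(3/2) ≤ (2w₁³ + 18w₁²w₂ + 18w₁w₂² + 2w₂³)/6 + 11(w₁ + w₂)/3 ≤ c₂·m^(3/2). -/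
open Matrix

namespace Stmt14Aux

noncomputable section

def Mr : Matrix (Fin 2) (Fin 2) ℝ := !![(-1 : ℝ), -6; 6, 35]
def Nr : Matrix (Fin 2) (Fin 2) ℝ := !![(35 : ℝ), 6; -6, -1]
def Tr : Matrix (Fin 2) (Fin 2) ℝ := !![(1 : ℝ), 6; 0, -1]
def Mz : Matrix (Fin 2) (Fin 2) ℤ := !![-1, -6; 6, 35]
def Nz : Matrix (Fin 2) (Fin 2) ℤ := !![35, 6; -6, -1]
def Tz : Matrix (Fin 2) (Fin 2) ℤ := !![1, 6; 0, -1]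

lemma MN : Mr * Nr = 1 := by
  ext i j
  fin_cases i <;> fin_cases j <;>
    simp [Mr, Nr, Matrix.mul_apply, Fin.sum_univ_two] <;> norm_num

lemma MNpow (s : ℕ) : Mr ^ s * Nr ^ s = 1 := by
  induction s with
  | zero => simp
  | succ s ih =>
    rw [pow_succ Mr, pow_succ' Nr, mul_assoc, ← mul_assoc Mr, MN, one_mul, ih]

lemma Mr_zpow_negSucc (s : ℕ) : Mr ^ (Int.negSucc s) = Nr ^ (s + 1) := by
  rw [zpow_negSucc]
  exact Matrix.inv_eq_right_inv (MNpow (s + 1))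

lemma cast_mulVec (A : Matrix (Fin 2) (Fin 2) ℤ) (v : Fin 2 → ℤ) :
    (fun i => ((A.mulVec v) i : ℝ)) = (A.map (Int.cast : ℤ → ℝ)).mulVec (fun i => (v i : ℝ)) := by
  funext i
  simp [Matrix.mulVec, dotProduct, Fin.sum_univ_two, Matrix.map_apply]

lemma map_pow' (A : Matrix (Fin 2) (Fin 2) ℤ) (s : ℕ) :
    (A ^ s).map (Int.cast : ℤ → ℝ) = (A.map (Int.cast : ℤ → ℝ)) ^ s := by
  have h := map_pow ((Int.castRingHom ℝ).mapMatrix) A s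
  simpa [RingHom.mapMatrix_apply] using h

lemma Mz_map : Mz.map (Int.cast : ℤ → ℝ) = Mr := by
  ext i j; fin_cases i <;> fin_cases j <;> simp [Mz, Mr]

lemma Nz_map : Nz.map (Int.cast : ℤ → ℝ) = Nr := by
  ext i j; fin_cases i <;> fin_cases j <;> simp [Nz, Nr]

lemma Tz_map : Tz.map (Int.cast : ℤ → ℝ) = Tr := by
  ext i j; fin_cases i <;> fin_cases j <;> simp [Tz, Tr]

/-- the integer vector realizing `Mr ^ K` applied to an integer vector -/
def wzOf (K : ℤ) (v : Fin 2 → ℤ) : Fin 2 → ℤ :=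
  match K with
  | .ofNat s => (Mz ^ s).mulVec v
  | .negSucc s => (Nz ^ (s + 1)).mulVec v

lemma wzOf_cast (K : ℤ) (v : Fin 2 → ℤ) :
    (fun i => ((wzOf K v) i : ℝ)) = (Mr ^ K).mulVec (fun i => (v i : ℝ)) := by
  cases K with
  | ofNat s =>
    show (fun i => (((Mz ^ s).mulVec v) i : ℝ)) = _
    rw [cast_mulVec, map_pow', Mz_map, Int.ofNat_eq_coe, zpow_natCast]
  | negSucc s =>
    show (fun i => (((Nz ^ (s + 1)).mulVec v) i : ℝ)) = _
    rw [cast_mulVec, map_pow', Nz_map, Mr_zpow_negSucc]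

lemma eigen_pow (A : Matrix (Fin 2) (Fin 2) ℝ) (d : Fin 2 → ℝ) (c : ℝ)
    (h : A.mulVec d = c • d) (s : ℕ) : (A ^ s).mulVec d = c ^ s • d := by
  induction s with
  | zero => simp
  | succ s ih =>
    rw [pow_succ', ← Matrix.mulVec_mulVec, ih, Matrix.mulVec_smul, h, smul_smul,
      pow_succ, mul_comm]

lemma zpow_mulVec (K : ℤ) (d : Fin 2 → ℝ) (c : ℝ)
    (hM : Mr.mulVec d = c • d) (hN : Nr.mulVec d = c⁻¹ • d) :
    (Mr ^ K).mulVec d = c ^ K • d := by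
  cases K with
  | ofNat s =>
    rw [Int.ofNat_eq_coe, zpow_natCast, zpow_natCast]
    exact eigen_pow _ _ _ hM s
  | negSucc s =>
    rw [Mr_zpow_negSucc, zpow_negSucc, eigen_pow _ _ _ hN, inv_pow]

lemma le_of_sq_le_sq' {a b : ℝ} (ha : 0 ≤ a) (hb : 0 ≤ b) (h : a ^ 2 ≤ b ^ 2) : a ≤ b := by
  nlinarith

end

end Stmt14Aux
open Stmt14Aux Matrix Set in
set_option maxHeartbeats 4000000 in
/-- Fix integers `a₁, a₂ ≥ 2`.  There exist constants `c₁, c₂ > 0` such that for every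
integer `m ≥ 1` there exist an integer `k` and a vector `w ∈ ℤ²` with
`w = M^k · v_m` or `w = T₁ · M^k · v_m` (where `M = !![-1,-6;6,35]`, `T₁ = !![1,6;0,-1]`
and `v_m = (⌊m(1-√2)⌋ + a₁, ⌊m(1+√2)⌋ + a₂)`), both coordinates of `w` nonnegative, and
`c₁·m^(3/2) ≤ (2w₁³+18w₁²w₂+18w₁w₂²+2w₂³)/6 + 11(w₁+w₂)/3 ≤ c₂·m^(3/2)`. -/
theorem stmt_14 (a₁ a₂ : ℤ) (ha₁ : 2 ≤ a₁) (ha₂ : 2 ≤ a₂) :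
    ∃ c₁ c₂ : ℝ, 0 < c₁ ∧ 0 < c₂ ∧
      ∀ m : ℤ, 1 ≤ m →
        ∃ (k : ℤ) (w : Fin 2 → ℤ),
          ((fun i => (w i : ℝ)) =
              ((!![(-1 : ℝ), -6; 6, 35] ^ k).mulVec
                ![(⌊(m : ℝ) * (1 - Real.sqrt 2)⌋ : ℝ) + (a₁ : ℝ),
                  (⌊(m : ℝ) * (1 + Real.sqrt 2)⌋ : ℝ) + (a₂ : ℝ)]) ∨
            (fun i => (w i : ℝ)) =
              ((!![(1 : ℝ), 6; 0, -1] * !![(-1 : ℝ), -6; 6, 35] ^ k).mulVec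
                ![(⌊(m : ℝ) * (1 - Real.sqrt 2)⌋ : ℝ) + (a₁ : ℝ),
                  (⌊(m : ℝ) * (1 + Real.sqrt 2)⌋ : ℝ) + (a₂ : ℝ)])) ∧
          0 ≤ w 0 ∧ 0 ≤ w 1 ∧
          c₁ * (m : ℝ) ^ ((3 : ℝ) / 2) ≤
              (2 * (w 0 : ℝ) ^ 3 + 18 * (w 0 : ℝ) ^ 2 * (w 1 : ℝ)
                  + 18 * (w 0 : ℝ) * (w 1 : ℝ) ^ 2 + 2 * (w 1 : ℝ) ^ 3) / 6
                + 11 * ((w 0 : ℝ) + (w 1 : ℝ)) / 3 ∧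
            (2 * (w 0 : ℝ) ^ 3 + 18 * (w 0 : ℝ) ^ 2 * (w 1 : ℝ)
                  + 18 * (w 0 : ℝ) * (w 1 : ℝ) ^ 2 + 2 * (w 1 : ℝ) ^ 3) / 6
                + 11 * ((w 0 : ℝ) + (w 1 : ℝ)) / 3
              ≤ c₂ * (m : ℝ) ^ ((3 : ℝ) / 2) := by
  have hr2 : Real.sqrt 2 ^ 2 = 2 := Real.sq_sqrt (by norm_num)
  set r := Real.sqrt 2 with hrdef
  clear_value r
  have hr0 : 0 ≤ r := by rw [hrdef]; exact Real.sqrt_nonneg 2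
  have hr_lb : 1.414 ≤ r := by nlinarith only [hr2, hr0]
  have hr_ub : r ≤ 1.415 := by nlinarith only [hr2, hr0]
  have ha₁r : (2 : ℝ) ≤ (a₁ : ℝ) := by exact_mod_cast ha₁
  have ha₂r : (2 : ℝ) ≤ (a₂ : ℝ) := by exact_mod_cast ha₂
  set A : ℝ := (a₁ : ℝ) + (a₂ : ℝ) with hA
  clear_value A
  have hA4 : (4 : ℝ) ≤ A := by simp [hA]; linarith
  have hA0 : (0 : ℝ) < A := by linarith
  refine ⟨1/384, 834 * A ^ 3 + 40 * A, by norm_num, by positivity, ?_⟩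
  intro m hm
  have hm1 : (1 : ℝ) ≤ (m : ℝ) := by exact_mod_cast hm
  have hm0 : (0 : ℝ) ≤ (m : ℝ) := by linarith
  set F0 : ℤ := ⌊(m : ℝ) * (1 - r)⌋ with hF0
  set F1 : ℤ := ⌊(m : ℝ) * (1 + r)⌋ with hF1
  set vz : Fin 2 → ℤ := ![F0 + a₁, F1 + a₂] with hvz
  have hvcast : (fun i => ((vz i : ℤ) : ℝ)) =
      ![((F0 : ℤ) : ℝ) + (a₁ : ℝ), ((F1 : ℤ) : ℝ) + (a₂ : ℝ)] := by
    funext i; fin_cases i <;> simp [hvz] <;> push_cast <;> ring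
  -- floor error bounds
  have hF0a : ((F0 : ℤ) : ℝ) ≤ (m : ℝ) * (1 - r) := Int.floor_le _
  have hF0b : (m : ℝ) * (1 - r) - 1 < ((F0 : ℤ) : ℝ) := Int.sub_one_lt_floor _
  have hF1a : ((F1 : ℤ) : ℝ) ≤ (m : ℝ) * (1 + r) := Int.floor_le _
  have hF1b : (m : ℝ) * (1 + r) - 1 < ((F1 : ℤ) : ℝ) := Int.sub_one_lt_floor _
  clear_value F0 F1 vz
  set e0 : ℝ := ((F0 : ℤ) : ℝ) + (a₁ : ℝ) - (m : ℝ) * (1 - r) with he0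
  set e1 : ℝ := ((F1 : ℤ) : ℝ) + (a₂ : ℝ) - (m : ℝ) * (1 + r) with he1
  clear_value e0 e1
  have he0_lb : 1 ≤ e0 := by rw [he0]; linarith
  have he0_ub : e0 ≤ (a₁ : ℝ) := by rw [he0]; linarith
  have he1_lb : 1 ≤ e1 := by rw [he1]; linarith
  have he1_ub : e1 ≤ (a₂ : ℝ) := by rw [he1]; linarith
  set p : ℝ := (m : ℝ) + e0 * (2 - r) / 8 + e1 * (2 + r) / 8 with hp
  set q : ℝ := e0 * (2 + r) / 8 + e1 * (2 - r) / 8 with hq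
  clear_value p q
  have h2mr : (0 : ℝ) ≤ 2 - r := by linarith
  have h2pr : (0 : ℝ) ≤ 2 + r := by linarith
  have hq_lb : 1/2 ≤ q := by
    have h1 : 0 ≤ (e0 - 1) * (2 + r) := mul_nonneg (by linarith) h2pr
    have h2 : 0 ≤ (e1 - 1) * (2 - r) := mul_nonneg (by linarith) h2mr
    rw [hq]; linarith
  have hq_ub : q ≤ A / 2 := by
    have h1 : 0 ≤ ((a₁ : ℝ) - e0) * (2 + r) := mul_nonneg (by linarith) h2pr
    have h2 : 0 ≤ ((a₂ : ℝ) - e1) * (2 - r) := mul_nonneg (by linarith) h2mr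
    have h3 : 0 ≤ (a₁ : ℝ) * (2 - r) := mul_nonneg (by linarith) h2mr
    have h4 : 0 ≤ (a₂ : ℝ) * (2 + r) := mul_nonneg (by linarith) h2pr
    rw [hq, hA]; linarith
  have hp_lb : (m : ℝ) + 1/2 ≤ p := by
    have h1 : 0 ≤ (e0 - 1) * (2 - r) := mul_nonneg (by linarith) h2mr
    have h2 : 0 ≤ (e1 - 1) * (2 + r) := mul_nonneg (by linarith) h2pr
    rw [hp]; linarith
  have hp_ub : p ≤ (m : ℝ) + A / 2 := by
    have h1 : 0 ≤ ((a₁ : ℝ) - e0) * (2 - r) := mul_nonneg (by linarith) h2mr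
    have h2 : 0 ≤ ((a₂ : ℝ) - e1) * (2 + r) := mul_nonneg (by linarith) h2pr
    have h3 : 0 ≤ (a₁ : ℝ) * (2 + r) := mul_nonneg (by linarith) h2pr
    have h4 : 0 ≤ (a₂ : ℝ) * (2 - r) := mul_nonneg (by linarith) h2mr
    rw [hp, hA]; linarith
  have hq0 : 0 < q := by linarith
  have hp0 : 0 < p := by linarith
  -- eigen data
  set dp : Fin 2 → ℝ := ![1 - r, 1 + r] with hdp
  set dm : Fin 2 → ℝ := ![1 + r, 1 - r] with hdm
  set l : ℝ := 17 + 12 * r with hl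
  clear_value dp dm l
  have hl0 : 0 < l := by rw [hl]; linarith
  have hl1 : 1 < l := by rw [hl]; linarith
  have hinv : (17 - 12 * r) = l⁻¹ :=
    eq_inv_of_mul_eq_one_left (by rw [hl]; linear_combination (-144 : ℝ) * hr2)
  have evalsimp : True := trivial
  have hMp : Mr.mulVec dp = l • dp := by
    rw [hdp, hl]; funext i; fin_cases i <;>
      simp [Mr, Matrix.mulVec, dotProduct, Fin.sum_univ_two] <;>
      first
        | linear_combination (12 : ℝ) * hr2
        | linear_combination (-12 : ℝ) * hr2
  have hMm : Mr.mulVec dm = l⁻¹ • dm := by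
    rw [hdm, ← hinv]; funext i; fin_cases i <;>
      simp [Mr, Matrix.mulVec, dotProduct, Fin.sum_univ_two] <;>
      first
        | linear_combination (12 : ℝ) * hr2
        | linear_combination (-12 : ℝ) * hr2
  have hNp : Nr.mulVec dp = l⁻¹ • dp := by
    rw [hdp, ← hinv]; funext i; fin_cases i <;>
      simp [Nr, Matrix.mulVec, dotProduct, Fin.sum_univ_two] <;>
      first
        | linear_combination (12 : ℝ) * hr2
        | linear_combination (-12 : ℝ) * hr2
  have hNm : Nr.mulVec dm = (l⁻¹)⁻¹ • dm := by
    rw [inv_inv, hdm, hl]; funext i; fin_cases i <;>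
      simp [Nr, Matrix.mulVec, dotProduct, Fin.sum_univ_two] <;>
      first
        | linear_combination (12 : ℝ) * hr2
        | linear_combination (-12 : ℝ) * hr2
  have hdecomp : (fun i => ((vz i : ℤ) : ℝ)) = p • dp + q • dm := by
    rw [hvcast, hdp, hdm]
    funext i; fin_cases i <;>
      simp [Pi.add_apply, Pi.smul_apply, smul_eq_mul] <;> rw [hp, hq, he0, he1] <;>
      first
        | linear_combination ((((F0 : ℤ) : ℝ) - ((F1 : ℤ) : ℝ) + (a₁ : ℝ) - (a₂ : ℝ)
            + 2 * (m : ℝ) * r) / 4) * hr2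
        | linear_combination (-(((F0 : ℤ) : ℝ) - ((F1 : ℤ) : ℝ) + (a₁ : ℝ) - (a₂ : ℝ)
            + 2 * (m : ℝ) * r) / 4) * hr2
  -- choice of the exponent
  have hrp1 : (0 : ℝ) < r + 1 := by linarith
  have hrm1 : (0 : ℝ) < r - 1 := by linarith
  have hx0 : 0 < p * (r - 1) / (q * (r + 1)) := by
    apply div_pos (mul_pos hp0 hrm1) (mul_pos hq0 hrp1)
  have hl2 : 1 < l ^ 2 := by nlinarith only [hl1]
  obtain ⟨n, hn⟩ := exists_mem_Ioc_zpow hx0 hl2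
  have hn1 : (l ^ 2) ^ n < p * (r - 1) / (q * (r + 1)) := hn.1
  have hn2 : p * (r - 1) / (q * (r + 1)) ≤ (l ^ 2) ^ (n + 1) := hn.2
  set k : ℤ := n + 1 with hk
  set t : ℝ := l ^ k with ht
  clear_value k t
  have ht0 : 0 < t := by rw [ht]; exact zpow_pos hl0 k
  have ht2 : t ^ 2 = (l ^ 2) ^ k := by rw [ht, sq, sq, mul_zpow]
  have hqr10 : 0 < q * (r + 1) := mul_pos hq0 hrp1
  have hc1 : p * (r - 1) ≤ t ^ 2 * (q * (r + 1)) := by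
    have h := (div_le_iff₀ hqr10).mp hn2
    rw [ht2]; exact h
  have hc2 : t ^ 2 * (q * (r + 1)) < p * (r - 1) * l ^ 2 := by
    have h1 : (l ^ 2) ^ k < p * (r - 1) / (q * (r + 1)) * l ^ 2 := by
      rw [hk, zpow_add_one₀ (by positivity : (l:ℝ) ^ 2 ≠ 0)]
      exact mul_lt_mul_of_pos_right hn1 (by positivity)
    rw [← ht2] at h1
    calc t ^ 2 * (q * (r + 1)) < (p * (r - 1) / (q * (r + 1)) * l ^ 2) * (q * (r + 1)) :=
          mul_lt_mul_of_pos_right h1 hqr10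
      _ = p * (r - 1) * l ^ 2 := by field_simp
  set u : ℝ := q * t with hu
  set v : ℝ := p * t⁻¹ with hv
  clear_value u v
  have hu0 : 0 < u := by rw [hu]; exact mul_pos hq0 ht0
  have hv0 : 0 < v := by rw [hv]; exact mul_pos hp0 (inv_pos.mpr ht0)
  have hvt2 : v ^ 2 * t ^ 2 = p ^ 2 := by rw [hv]; field_simp
  set g : ℝ := Real.sqrt (p * q) with hg
  clear_value g
  have hg0 : 0 ≤ g := by rw [hg]; exact Real.sqrt_nonneg _
  have hg2 : g ^ 2 = p * q := by rw [hg]; exact Real.sq_sqrt (by positivity)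
  -- algebraic identities modulo r^2 = 2
  have hid1 : (3 - 2 * r) * (r + 1) = r - 1 := by linear_combination (-2 : ℝ) * hr2
  have hid2 : (3 + 2 * r) * (r - 1) = r + 1 := by linear_combination (2 : ℝ) * hr2
  have hid3 : (99 + 70 * r) * (r + 1) = (r - 1) * l ^ 2 := by
    rw [hl]; linear_combination (-144 * r - 194) * hr2
  have hsqm : (g * (r - 1)) ^ 2 = p * q * (3 - 2 * r) := by
    linear_combination (r ^ 2 - 2 * r + 1) * hg2 + p * q * hr2
  have hsqp : (g * (r + 1)) ^ 2 = p * q * (3 + 2 * r) := by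
    linear_combination (r ^ 2 + 2 * r + 1) * hg2 + p * q * hr2
  have hsq7 : (g * (7 + 5 * r)) ^ 2 = p * q * (99 + 70 * r) := by
    linear_combination (7 + 5 * r) ^ 2 * hg2 + 25 * p * q * hr2
  -- main existence of the lattice vector
  have main : ∃ wv : Fin 2 → ℤ,
      ((fun i => ((wv i : ℤ) : ℝ)) = (Mr ^ (-k)).mulVec (fun i => ((vz i : ℤ) : ℝ)) ∨
        (fun i => ((wv i : ℤ) : ℝ)) = (Tr * Mr ^ (-k)).mulVec (fun i => ((vz i : ℤ) : ℝ))) ∧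
      0 ≤ ((wv 0 : ℤ) : ℝ) ∧ 0 ≤ ((wv 1 : ℤ) : ℝ) ∧
      g / 2 ≤ ((wv 0 : ℤ) : ℝ) + ((wv 1 : ℤ) : ℝ) ∧
      ((wv 0 : ℤ) : ℝ) + ((wv 1 : ℤ) : ℝ) ≤ 10 * g := by
    have hlK : l ^ (-k) = t⁻¹ := by rw [_root_.zpow_neg, ht]
    have hliK : (l⁻¹) ^ (-k) = t := by rw [_root_.inv_zpow, _root_.zpow_neg, inv_inv, ht]
    have hMrK : (Mr ^ (-k)).mulVec (fun i => ((vz i : ℤ) : ℝ)) =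
        ![v * (1 - r) + u * (1 + r), v * (1 + r) + u * (1 - r)] := by
      rw [hdecomp, Matrix.mulVec_add, Matrix.mulVec_smul, Matrix.mulVec_smul,
        zpow_mulVec (-k) dp l hMp hNp, zpow_mulVec (-k) dm l⁻¹ hMm hNm, hlK, hliK,
        hdp, hdm, hu, hv]
      funext i; fin_cases i <;>
        simp [Pi.add_apply, Pi.smul_apply, smul_eq_mul] <;> ring
    have hTrK : (Tr * Mr ^ (-k)).mulVec (fun i => ((vz i : ℤ) : ℝ)) =
        ![v * (7 + 5 * r) + u * (7 - 5 * r), u * (r - 1) - v * (1 + r)] := by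
      rw [← Matrix.mulVec_mulVec, hMrK]
      funext i; fin_cases i <;>
        simp [Tr, Matrix.mulVec, dotProduct, Fin.sum_univ_two] <;> ring
    by_cases hbr : q * (r - 1) * t ^ 2 ≤ p * (r + 1)
    · -- M branch
      have key_u_lb : p * q * (3 - 2 * r) ≤ u ^ 2 := by
        have h := mul_le_mul_of_nonneg_left hc1 hq0.le
        have h2 : (p * q * (3 - 2 * r)) * (r + 1) ≤ u ^ 2 * (r + 1) := by
          calc (p * q * (3 - 2 * r)) * (r + 1) = p * q * ((3 - 2 * r) * (r + 1)) := by ring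
            _ = p * q * (r - 1) := by rw [hid1]
            _ = q * (p * (r - 1)) := by ring
            _ ≤ q * (t ^ 2 * (q * (r + 1))) := h
            _ = u ^ 2 * (r + 1) := by rw [hu]; ring
        exact le_of_mul_le_mul_right h2 hrp1
      have key_u_ub : u ^ 2 ≤ p * q * (3 + 2 * r) := by
        have h := mul_le_mul_of_nonneg_left hbr hq0.le
        have h2 : u ^ 2 * (r - 1) ≤ (p * q * (3 + 2 * r)) * (r - 1) := by
          calc u ^ 2 * (r - 1) = q * (q * (r - 1) * t ^ 2) := by rw [hu]; ring
            _ ≤ q * (p * (r + 1)) := h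
            _ = p * q * (r + 1) := by ring
            _ = p * q * ((3 + 2 * r) * (r - 1)) := by rw [hid2]
            _ = (p * q * (3 + 2 * r)) * (r - 1) := by ring
        exact le_of_mul_le_mul_right h2 hrm1
      have key_v_lb : p * q * (3 - 2 * r) ≤ v ^ 2 := by
        have h := mul_le_mul_of_nonneg_left hbr hp0.le
        have h2 : (p * q * (3 - 2 * r) * t ^ 2) * (r + 1) ≤ (p ^ 2) * (r + 1) := by
          calc (p * q * (3 - 2 * r) * t ^ 2) * (r + 1)
              = p * q * t ^ 2 * ((3 - 2 * r) * (r + 1)) := by ring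
            _ = p * q * t ^ 2 * (r - 1) := by rw [hid1]
            _ = p * (q * (r - 1) * t ^ 2) := by ring
            _ ≤ p * (p * (r + 1)) := h
            _ = p ^ 2 * (r + 1) := by ring
        have h3 : p * q * (3 - 2 * r) * t ^ 2 ≤ p ^ 2 := le_of_mul_le_mul_right h2 hrp1
        have h4 : (p * q * (3 - 2 * r)) * t ^ 2 ≤ v ^ 2 * t ^ 2 := by
          rw [hvt2]; calc (p * q * (3 - 2 * r)) * t ^ 2 = p * q * (3 - 2 * r) * t ^ 2 := by ring
            _ ≤ p ^ 2 := h3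
        exact le_of_mul_le_mul_right h4 (by positivity)
      have key_v_ub : v ^ 2 ≤ p * q * (3 + 2 * r) := by
        have h := mul_le_mul_of_nonneg_left hc1 hp0.le
        have h2 : p ^ 2 * (r - 1) ≤ (p * q * (3 + 2 * r) * t ^ 2) * (r - 1) := by
          calc p ^ 2 * (r - 1) = p * (p * (r - 1)) := by ring
            _ ≤ p * (t ^ 2 * (q * (r + 1))) := h
            _ = p * q * t ^ 2 * (r + 1) := by ring
            _ = p * q * t ^ 2 * ((3 + 2 * r) * (r - 1)) := by rw [hid2]
            _ = (p * q * (3 + 2 * r) * t ^ 2) * (r - 1) := by ring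
        have h3 : p ^ 2 ≤ p * q * (3 + 2 * r) * t ^ 2 := le_of_mul_le_mul_right h2 hrm1
        have h4 : v ^ 2 * t ^ 2 ≤ (p * q * (3 + 2 * r)) * t ^ 2 := by
          rw [hvt2]; calc p ^ 2 ≤ p * q * (3 + 2 * r) * t ^ 2 := h3
            _ = (p * q * (3 + 2 * r)) * t ^ 2 := by ring
        exact le_of_mul_le_mul_right h4 (by positivity)
      have hu_lb : g * (r - 1) ≤ u :=
        le_of_sq_le_sq' (mul_nonneg hg0 hrm1.le) hu0.le (by rw [hsqm]; exact key_u_lb)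
      have hu_ub : u ≤ g * (r + 1) :=
        le_of_sq_le_sq' hu0.le (mul_nonneg hg0 hrp1.le) (by rw [hsqp]; exact key_u_ub)
      have hv_lb : g * (r - 1) ≤ v :=
        le_of_sq_le_sq' (mul_nonneg hg0 hrm1.le) hv0.le (by rw [hsqm]; exact key_v_lb)
      have hv_ub : v ≤ g * (r + 1) :=
        le_of_sq_le_sq' hv0.le (mul_nonneg hg0 hrp1.le) (by rw [hsqp]; exact key_v_ub)
      have pos1 : g ≤ u * (r + 1) := by
        have h := mul_le_mul_of_nonneg_right hu_lb hrp1.le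
        have e : g * (r - 1) * (r + 1) = g := by linear_combination g * hr2
        linarith
      have pos2 : v * (r - 1) ≤ g := by
        have h := mul_le_mul_of_nonneg_right hv_ub hrm1.le
        have e : g * (r + 1) * (r - 1) = g := by linear_combination g * hr2
        linarith
      have pos3 : g ≤ v * (r + 1) := by
        have h := mul_le_mul_of_nonneg_right hv_lb hrp1.le
        have e : g * (r - 1) * (r + 1) = g := by linear_combination g * hr2
        linarith
      have pos4 : u * (r - 1) ≤ g := by
        have h := mul_le_mul_of_nonneg_right hu_ub hrm1.le
        have e : g * (r + 1) * (r - 1) = g := by linear_combination g * hr2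
        linarith
      have hcfun' : (fun i => ((wzOf (-k) vz i : ℤ) : ℝ)) =
          (Mr ^ (-k)).mulVec (fun i => ((vz i : ℤ) : ℝ)) := wzOf_cast (-k) vz
      have hcfun : (fun i => ((wzOf (-k) vz i : ℤ) : ℝ)) =
          ![v * (1 - r) + u * (1 + r), v * (1 + r) + u * (1 - r)] := hcfun'.trans hMrK
      have hco0 : ((wzOf (-k) vz 0 : ℤ) : ℝ) = v * (1 - r) + u * (1 + r) := by
        simpa using congrFun hcfun 0
      have hco1 : ((wzOf (-k) vz 1 : ℤ) : ℝ) = v * (1 + r) + u * (1 - r) := by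
        simpa using congrFun hcfun 1
      refine ⟨wzOf (-k) vz, Or.inl hcfun', ?_, ?_, ?_, ?_⟩ <;> simp only [hco0, hco1]
      · linarith
      · linarith
      · nlinarith only [hu_lb, hv_lb, hg0, hr_lb]
      · nlinarith only [hu_ub, hv_ub, hg0, hr_ub]
    · -- T branch
      push_neg at hbr
      have hbr2 : p * (r + 1) ≤ q * (r - 1) * t ^ 2 := hbr.le
      have key_u_lb : p * q * (3 + 2 * r) ≤ u ^ 2 := by
        have h := mul_le_mul_of_nonneg_left hbr2 hq0.le
        have h2 : (p * q * (3 + 2 * r)) * (r - 1) ≤ u ^ 2 * (r - 1) := by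
          calc (p * q * (3 + 2 * r)) * (r - 1) = p * q * ((3 + 2 * r) * (r - 1)) := by ring
            _ = p * q * (r + 1) := by rw [hid2]
            _ = q * (p * (r + 1)) := by ring
            _ ≤ q * (q * (r - 1) * t ^ 2) := h
            _ = u ^ 2 * (r - 1) := by rw [hu]; ring
        exact le_of_mul_le_mul_right h2 hrm1
      have key_u_ub : u ^ 2 ≤ p * q * (99 + 70 * r) := by
        have h := mul_le_mul_of_nonneg_left hc2.le hq0.le
        have h2 : u ^ 2 * (r + 1) ≤ (p * q * (99 + 70 * r)) * (r + 1) := by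
          calc u ^ 2 * (r + 1) = q * (t ^ 2 * (q * (r + 1))) := by rw [hu]; ring
            _ ≤ q * (p * (r - 1) * l ^ 2) := h
            _ = p * q * ((r - 1) * l ^ 2) := by ring
            _ = p * q * ((99 + 70 * r) * (r + 1)) := by rw [hid3]
            _ = (p * q * (99 + 70 * r)) * (r + 1) := by ring
        exact le_of_mul_le_mul_right h2 hrp1
      have key_v_ub : v ^ 2 ≤ p * q * (3 - 2 * r) := by
        have h := mul_le_mul_of_nonneg_left hbr2 hp0.le
        have h2 : p ^ 2 * (r + 1) ≤ (p * q * (3 - 2 * r) * t ^ 2) * (r + 1) := by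
          calc p ^ 2 * (r + 1) = p * (p * (r + 1)) := by ring
            _ ≤ p * (q * (r - 1) * t ^ 2) := h
            _ = p * q * t ^ 2 * (r - 1) := by ring
            _ = p * q * t ^ 2 * ((3 - 2 * r) * (r + 1)) := by rw [hid1]
            _ = (p * q * (3 - 2 * r) * t ^ 2) * (r + 1) := by ring
        have h3 : p ^ 2 ≤ p * q * (3 - 2 * r) * t ^ 2 := le_of_mul_le_mul_right h2 hrp1
        have h4 : v ^ 2 * t ^ 2 ≤ (p * q * (3 - 2 * r)) * t ^ 2 := by
          rw [hvt2]; calc p ^ 2 ≤ p * q * (3 - 2 * r) * t ^ 2 := h3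
            _ = (p * q * (3 - 2 * r)) * t ^ 2 := by ring
        exact le_of_mul_le_mul_right h4 (by positivity)
      have key_v_lb : p * q ≤ v ^ 2 * (99 + 70 * r) := by
        have h := mul_le_mul_of_nonneg_left hc2.le hp0.le
        have h2 : (p * q * t ^ 2) * (r + 1) ≤ (p ^ 2 * (99 + 70 * r)) * (r + 1) := by
          calc (p * q * t ^ 2) * (r + 1) = p * (t ^ 2 * (q * (r + 1))) := by ring
            _ ≤ p * (p * (r - 1) * l ^ 2) := h
            _ = p ^ 2 * ((r - 1) * l ^ 2) := by ring
            _ = p ^ 2 * ((99 + 70 * r) * (r + 1)) := by rw [hid3]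
            _ = (p ^ 2 * (99 + 70 * r)) * (r + 1) := by ring
        have h3 : p * q * t ^ 2 ≤ p ^ 2 * (99 + 70 * r) := le_of_mul_le_mul_right h2 hrp1
        have h4 : (p * q) * t ^ 2 ≤ (v ^ 2 * (99 + 70 * r)) * t ^ 2 := by
          calc (p * q) * t ^ 2 ≤ p ^ 2 * (99 + 70 * r) := by linarith
            _ = (v ^ 2 * t ^ 2) * (99 + 70 * r) := by rw [hvt2]
            _ = (v ^ 2 * (99 + 70 * r)) * t ^ 2 := by ring
        exact le_of_mul_le_mul_right h4 (by positivity)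
      have h75 : (0:ℝ) < 7 + 5 * r := by linarith
      have h57 : (0:ℝ) ≤ 5 * r - 7 := by linarith
      have hu_lb : g * (r + 1) ≤ u :=
        le_of_sq_le_sq' (mul_nonneg hg0 hrp1.le) hu0.le (by rw [hsqp]; exact key_u_lb)
      have hu_ub : u ≤ g * (7 + 5 * r) :=
        le_of_sq_le_sq' hu0.le (mul_nonneg hg0 h75.le) (by rw [hsq7]; exact key_u_ub)
      have hv_ub : v ≤ g * (r - 1) :=
        le_of_sq_le_sq' hv0.le (mul_nonneg hg0 hrm1.le) (by rw [hsqm]; exact key_v_ub)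
      have hv_lb : g ≤ v * (7 + 5 * r) := by
        apply le_of_sq_le_sq' hg0 (by positivity)
        have : (v * (7 + 5 * r)) ^ 2 = v ^ 2 * (99 + 70 * r) := by
          linear_combination 25 * v ^ 2 * hr2
        rw [hg2, this]; exact key_v_lb
      have pos1 : u * (5 * r - 7) ≤ g := by
        have h := mul_le_mul_of_nonneg_right hu_ub h57
        have e : g * (7 + 5 * r) * (5 * r - 7) = g := by linear_combination 25 * g * hr2
        linarith
      have pos2 : g ≤ u * (r - 1) := by
        have h := mul_le_mul_of_nonneg_right hu_lb hrm1.le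
        have e : g * (r + 1) * (r - 1) = g := by linear_combination g * hr2
        linarith
      have pos3 : v * (1 + r) ≤ g := by
        have h := mul_le_mul_of_nonneg_right hv_ub hrp1.le
        have e : g * (r - 1) * (r + 1) = g := by linear_combination g * hr2
        linarith
      have s_lb : g / 2 ≤ v * (7 + 5 * r) + u * (7 - 5 * r) + (u * (r - 1) - v * (1 + r)) := by
        have t1 : (g * (r + 1)) * (6 - 4 * r) ≤ u * (6 - 4 * r) :=
          mul_le_mul_of_nonneg_right hu_lb (by linarith)
        have e64 : (g * (r + 1)) * (6 - 4 * r) = g * (2 * r - 2) := by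
          linear_combination (-4 : ℝ) * g * hr2
        have t2 : (0:ℝ) ≤ v * (6 + 4 * r) := mul_nonneg hv0.le (by linarith)
        nlinarith only [t1, t2, e64, hg0, hr_lb]
      have s_ub : v * (7 + 5 * r) + u * (7 - 5 * r) + (u * (r - 1) - v * (1 + r)) ≤ 10 * g := by
        have t3 : v * (6 + 4 * r) ≤ (g * (r - 1)) * (6 + 4 * r) :=
          mul_le_mul_of_nonneg_right hv_ub (by linarith)
        have e64b : (g * (r - 1)) * (6 + 4 * r) = g * (2 * r + 2) := by
          linear_combination (4 : ℝ) * g * hr2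
        have t4 : u * (6 - 4 * r) ≤ (g * (7 + 5 * r)) * (6 - 4 * r) :=
          mul_le_mul_of_nonneg_right hu_ub (by linarith)
        have e64c : (g * (7 + 5 * r)) * (6 - 4 * r) = g * (2 + 2 * r) := by
          linear_combination (-20 : ℝ) * g * hr2
        nlinarith only [t3, t4, e64b, e64c, hg0, hr_ub]
      have hcfun' : (fun i => ((Tz.mulVec (wzOf (-k) vz) i : ℤ) : ℝ)) =
          (Tr * Mr ^ (-k)).mulVec (fun i => ((vz i : ℤ) : ℝ)) := by
        rw [cast_mulVec, Tz_map, wzOf_cast, Matrix.mulVec_mulVec]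
      have hcfun : (fun i => ((Tz.mulVec (wzOf (-k) vz) i : ℤ) : ℝ)) =
          ![v * (7 + 5 * r) + u * (7 - 5 * r), u * (r - 1) - v * (1 + r)] := hcfun'.trans hTrK
      have hco0 : ((Tz.mulVec (wzOf (-k) vz) 0 : ℤ) : ℝ) = v * (7 + 5 * r) + u * (7 - 5 * r) := by
        simpa using congrFun hcfun 0
      have hco1 : ((Tz.mulVec (wzOf (-k) vz) 1 : ℤ) : ℝ) = u * (r - 1) - v * (1 + r) := by
        simpa using congrFun hcfun 1
      refine ⟨Tz.mulVec (wzOf (-k) vz), Or.inr hcfun', ?_, ?_, ?_, ?_⟩ <;> simp only [hco0, hco1]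
      · linarith
      · linarith
      · linarith [s_lb]
      · linarith [s_ub]
  -- final numeric estimates
  obtain ⟨wv, hor, hz0, hz1, hslb, hsub⟩ := main
  have hw0 : 0 ≤ wv 0 := by exact_mod_cast hz0
  have hw1 : 0 ≤ wv 1 := by exact_mod_cast hz1
  -- bounds on g in terms of sqrt m
  set mg : ℝ := Real.sqrt (m : ℝ) with hmg
  clear_value mg
  have hmg0 : 0 ≤ mg := by rw [hmg]; exact Real.sqrt_nonneg _
  have hmg2 : mg ^ 2 = (m : ℝ) := by rw [hmg]; exact Real.sq_sqrt hm0
  have hmg1 : 1 ≤ mg := by nlinarith only [hmg2, hmg0, hm1]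
  have hg_lb : mg / 2 ≤ g := by
    apply le_of_sq_le_sq' (by positivity) hg0
    have : (mg / 2) ^ 2 = (m : ℝ) / 4 := by rw [div_pow, hmg2]; norm_num
    rw [this, hg2]; nlinarith only [hp_lb, hq_lb, hm1]
  have hg_ub : g ≤ A * mg := by
    apply le_of_sq_le_sq' hg0 (by positivity)
    have : (A * mg) ^ 2 = A ^ 2 * (m : ℝ) := by rw [mul_pow, hmg2]
    rw [this, hg2]; nlinarith only [hp_ub, hq_ub, hm1, hm0, hA4, hA0.le, hq0, hp0, sq_nonneg A, mul_nonneg hm0 hA0.le]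
  have hrpow : (m : ℝ) ^ ((3 : ℝ) / 2) = mg ^ 3 := by
    rw [show ((3 : ℝ) / 2) = (3 : ℝ) / 2 from rfl, Real.rpow_div_two_eq_sqrt _ hm0, ← hmg,
      ← Real.rpow_natCast mg 3]
    norm_num
  refine ⟨-k, wv, ?_, hw0, hw1, ?_, ?_⟩
  · rw [show (![((F0 : ℤ) : ℝ) + (a₁ : ℝ), ((F1 : ℤ) : ℝ) + (a₂ : ℝ)] : Fin 2 → ℝ) =
      (fun i => ((vz i : ℤ) : ℝ)) from hvcast.symm]
    rw [show (!![(-1 : ℝ), -6; 6, 35]) = Mr from rfl, show (!![(1 : ℝ), 6; 0, -1]) = Tr from rfl]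
    exact hor
  · -- lower bound
    rw [hrpow]
    have hf_lb : (((wv 0 : ℤ) : ℝ) + ((wv 1 : ℤ) : ℝ)) ^ 3 ≤
        2 * ((wv 0 : ℤ) : ℝ) ^ 3 + 18 * ((wv 0 : ℤ) : ℝ) ^ 2 * ((wv 1 : ℤ) : ℝ)
          + 18 * ((wv 0 : ℤ) : ℝ) * ((wv 1 : ℤ) : ℝ) ^ 2 + 2 * ((wv 1 : ℤ) : ℝ) ^ 3 := by
      nlinarith only [mul_nonneg (mul_nonneg hz0 hz0) hz1, mul_nonneg (mul_nonneg hz0 hz1) hz1,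
        pow_nonneg hz0 3, pow_nonneg hz1 3]
    have hs2 : mg / 4 ≤ ((wv 0 : ℤ) : ℝ) + ((wv 1 : ℤ) : ℝ) := by linarith
    have h3 : (mg / 4) ^ 3 ≤ (((wv 0 : ℤ) : ℝ) + ((wv 1 : ℤ) : ℝ)) ^ 3 :=
      pow_le_pow_left₀ (by positivity) hs2 3
    have hss : 0 ≤ ((wv 0 : ℤ) : ℝ) + ((wv 1 : ℤ) : ℝ) := by linarith
    linarith only [hf_lb, h3, hss]
  · -- upper bound
    rw [hrpow]
    have hf_ub : 2 * ((wv 0 : ℤ) : ℝ) ^ 3 + 18 * ((wv 0 : ℤ) : ℝ) ^ 2 * ((wv 1 : ℤ) : ℝ)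
          + 18 * ((wv 0 : ℤ) : ℝ) * ((wv 1 : ℤ) : ℝ) ^ 2 + 2 * ((wv 1 : ℤ) : ℝ) ^ 3 ≤
        5 * (((wv 0 : ℤ) : ℝ) + ((wv 1 : ℤ) : ℝ)) ^ 3 := by
      nlinarith only [mul_nonneg (sq_nonneg (((wv 0 : ℤ) : ℝ) - ((wv 1 : ℤ) : ℝ))) (add_nonneg hz0 hz1)]
    have hs2 : ((wv 0 : ℤ) : ℝ) + ((wv 1 : ℤ) : ℝ) ≤ 10 * A * mg := by
      have : 10 * g ≤ 10 * (A * mg) := by linarith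
      linarith
    have h3 : (((wv 0 : ℤ) : ℝ) + ((wv 1 : ℤ) : ℝ)) ^ 3 ≤ (10 * A * mg) ^ 3 :=
      pow_le_pow_left₀ (add_nonneg hz0 hz1) hs2 3
    have hcube : (10 * A * mg) ^ 3 = 1000 * A ^ 3 * mg ^ 3 := by ring
    have hmgc : mg ≤ mg ^ 3 := by nlinarith only [hmg1, hmg0, sq_nonneg (mg - 1)]
    have hAm : A * mg ≤ A * mg ^ 3 := mul_le_mul_of_nonneg_left hmgc hA0.le
    have hA3 : 0 ≤ A ^ 3 * mg ^ 3 := by positivity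
    have hA1 : 0 ≤ A * mg ^ 3 := by positivity
    rw [hcube] at h3
    linarith only [hf_ub, h3, hs2, hAm, hA3, hA1]
end
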